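/- arXiv:1307.0769 — 3 statements merged into one kernel-verified Lean document; each statement's English description precedes it below -/
import Mathlib

section
/- Let B₀ ⊆ B be a two-sided ideal such that the spans of s(B₀)A and t(B₀)A equal A. Then, inside the vector space A⊗A (tensor over ℂ), the span of {s(x)a⊗b−a⊗t(x)b : x∈B, a,b∈A} equals the span of {s(x₀)a⊗b−a⊗t(x₀)b : x₀∈B₀, a,b∈A}; consequently the natural map from the B₀-balanced tensor product to the B-balanced tensor product is an isomorphism. Moreover, every linear map ε:A→B with ε(s(x)a)=xε(a) for all x∈B, a∈A satisfies ε(A) ⊆ B₀. -/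
open scoped TensorProduct

noncomputable section

/-- A multiplier of a non-unital complex algebra `A`: a pair `T = (L, R)` of ℂ-linear maps
`A → A` satisfying `L (a*b) = L a * b`, `R (a*b) = a * R b` and `R a * b = a * L b`.
We write `T a := L a` and `a T := R a`. -/
structure Mult (A : Type*) [NonUnitalRing A] [Module ℂ A]
    [SMulCommClass ℂ A A] [IsScalarTower ℂ A A] where
  L : A →ₗ[ℂ] A
  R : A →ₗ[ℂ] A
  hL : ∀ a b : A, L (a * b) = L a * b
  hR : ∀ a b : A, R (a * b) = a * R b
  hC : ∀ a b : A, R a * b = a * L b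

namespace Mult

variable {A : Type*} [NonUnitalRing A] [Module ℂ A] [SMulCommClass ℂ A A] [IsScalarTower ℂ A A]

/-- Multiplication of multipliers: `(L,R)·(L′,R′) = (L∘L′, R′∘R)`. -/
instance : Mul (Mult A) :=
  ⟨fun T U =>
    { L := T.L ∘ₗ U.L
      R := U.R ∘ₗ T.R
      hL := fun a b => by simp [U.hL, T.hL]
      hR := fun a b => by simp [T.hR, U.hR]
      hC := fun a b => by simp [U.hC, T.hC] }⟩

instance : Add (Mult A) :=
  ⟨fun T U =>
    { L := T.L + U.L
      R := T.R + U.R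
      hL := fun a b => by simp [T.hL, U.hL, add_mul]
      hR := fun a b => by simp [T.hR, U.hR, mul_add]
      hC := fun a b => by simp [T.hC, U.hC, add_mul, mul_add] }⟩

instance : SMul ℂ (Mult A) :=
  ⟨fun c T =>
    { L := c • T.L
      R := c • T.R
      hL := fun a b => by simp [T.hL, smul_mul_assoc]
      hR := fun a b => by simp [T.hR, mul_smul_comm]
      hC := fun a b => by simp [T.hC, smul_mul_assoc, mul_smul_comm] }⟩

end Mult

section Maps

variable {A : Type*} [NonUnitalRing A] [Module ℂ A] [SMulCommClass ℂ A A] [IsScalarTower ℂ A A]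

/-- `w ↦ w · (c ⊗ 1)` on `A ⊗ A`. -/
def rmul₁ (c : A) : A ⊗[ℂ] A →ₗ[ℂ] A ⊗[ℂ] A :=
  TensorProduct.map (LinearMap.mulRight ℂ c) LinearMap.id

/-- `w ↦ w · (1 ⊗ c)` on `A ⊗ A`. -/
def rmul₂ (c : A) : A ⊗[ℂ] A →ₗ[ℂ] A ⊗[ℂ] A :=
  TensorProduct.map LinearMap.id (LinearMap.mulRight ℂ c)

/-- `w ↦ (c ⊗ 1) · w` on `A ⊗ A`. -/
def lmul₁ (c : A) : A ⊗[ℂ] A →ₗ[ℂ] A ⊗[ℂ] A :=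
  TensorProduct.map (LinearMap.mulLeft ℂ c) LinearMap.id

/-- `w ↦ (1 ⊗ c) · w` on `A ⊗ A`. -/
def lmul₂ (c : A) : A ⊗[ℂ] A →ₗ[ℂ] A ⊗[ℂ] A :=
  TensorProduct.map LinearMap.id (LinearMap.mulLeft ℂ c)

/-- `b ↦ a ⊗ b`. -/
def tmulL (a : A) : A →ₗ[ℂ] A ⊗[ℂ] A := TensorProduct.mk ℂ A A a

/-- `a ↦ a ⊗ b`. -/
def tmulR (b : A) : A →ₗ[ℂ] A ⊗[ℂ] A := (TensorProduct.mk ℂ A A).flip b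

/-- `(x ⊗ y) ⊗ v ↦ x ⊗ (y * v)`. -/
def mulIn23 : (A ⊗[ℂ] A) ⊗[ℂ] A →ₗ[ℂ] A ⊗[ℂ] A :=
  TensorProduct.map LinearMap.id (LinearMap.mul' ℂ A) ∘ₗ
    (TensorProduct.assoc ℂ A A A).toLinearMap

/-- `(x ⊗ y) ⊗ v ↦ x ⊗ (v * y)`. -/
def mulIn23' : (A ⊗[ℂ] A) ⊗[ℂ] A →ₗ[ℂ] A ⊗[ℂ] A :=
  TensorProduct.map LinearMap.id
      (LinearMap.mul' ℂ A ∘ₗ (TensorProduct.comm ℂ A A).toLinearMap) ∘ₗ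
    (TensorProduct.assoc ℂ A A A).toLinearMap

/-- `u ⊗ (x ⊗ y) ↦ (x * u) ⊗ y`. -/
def mulIn1 : A ⊗[ℂ] (A ⊗[ℂ] A) →ₗ[ℂ] A ⊗[ℂ] A :=
  TensorProduct.map (LinearMap.mul' ℂ A) LinearMap.id ∘ₗ
    (TensorProduct.assoc ℂ A A A).symm.toLinearMap ∘ₗ
    (TensorProduct.leftComm ℂ A A A).toLinearMap

/-- `u ⊗ (x ⊗ y) ↦ (u * x) ⊗ y`. -/
def mulIn1' : A ⊗[ℂ] (A ⊗[ℂ] A) →ₗ[ℂ] A ⊗[ℂ] A :=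
  TensorProduct.map (LinearMap.mul' ℂ A ∘ₗ (TensorProduct.comm ℂ A A).toLinearMap)
      LinearMap.id ∘ₗ
    (TensorProduct.assoc ℂ A A A).symm.toLinearMap ∘ₗ
    (TensorProduct.leftComm ℂ A A A).toLinearMap

end Maps

/-- The basic data for a left multiplier bialgebroid: non-unital complex algebras `A`, `B`,
an algebra homomorphism `s : B → M(A)`, an algebra anti-homomorphism `t : B → M(A)` with
commuting images; `A` is idempotent and non-degenerate, `s`, `t` are faithful and the spans
of `s(B)A` and `t(B)A` equal `A`. -/
structure BaseData (A B : Type*) [NonUnitalRing A] [Module ℂ A] [SMulCommClass ℂ A A]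
    [IsScalarTower ℂ A A] [NonUnitalRing B] [Module ℂ B] [SMulCommClass ℂ B B]
    [IsScalarTower ℂ B B] where
  s : B → Mult A
  t : B → Mult A
  s_add : ∀ x y : B, s (x + y) = s x + s y
  s_smul : ∀ (c : ℂ) (x : B), s (c • x) = c • s x
  s_mul : ∀ x y : B, s (x * y) = s x * s y
  t_add : ∀ x y : B, t (x + y) = t x + t y
  t_smul : ∀ (c : ℂ) (x : B), t (c • x) = c • t x
  t_mul : ∀ x y : B, t (x * y) = t y * t x
  st_comm : ∀ x y : B, s x * t y = t y * s x
  A_nd : ∀ a : A, (∀ b : A, a * b = 0) → a = 0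
  A_idem : Submodule.span ℂ {z : A | ∃ a b : A, z = a * b} = ⊤
  s_faithful : ∀ x : B, (∀ a : A, (s x).L a = 0) → x = 0
  t_faithful : ∀ x : B, (∀ a : A, (t x).L a = 0) → x = 0
  s_span : Submodule.span ℂ {z : A | ∃ (x : B) (a : A), z = (s x).L a} = ⊤
  t_span : Submodule.span ℂ {z : A | ∃ (x : B) (a : A), z = (t x).L a} = ⊤

section LeftBgd

variable {A B : Type*}
  [NonUnitalRing A] [Module ℂ A] [SMulCommClass ℂ A A] [IsScalarTower ℂ A A]
  [NonUnitalRing B] [Module ℂ B] [SMulCommClass ℂ B B] [IsScalarTower ℂ B B]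

/-- The subspace of `A ⊗ A` by which one quotients to obtain `A ⊗̄ A`:
the span of all `s(x)a ⊗ b − a ⊗ t(x)b`. -/
def BaseData.relB (D : BaseData A B) : Submodule ℂ (A ⊗[ℂ] A) :=
  Submodule.span ℂ
    {z : A ⊗[ℂ] A | ∃ (x : B) (a b : A), z = (D.s x).L a ⊗ₜ[ℂ] b - a ⊗ₜ[ℂ] (D.t x).L b}

/-- Non-degeneracy of `A ⊗̄ A` as a right module over `A ⊗ 1` and over `1 ⊗ A`,
formulated via representatives. -/
def condA3 (D : BaseData A B) : Prop :=
  (∀ u : A ⊗[ℂ] A, (∀ c : A, rmul₁ c u ∈ D.relB) → u ∈ D.relB) ∧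
  (∀ u : A ⊗[ℂ] A, (∀ c : A, rmul₂ c u ∈ D.relB) → u ∈ D.relB)

/-- (L1): `T̃λ(s(x)a⊗b) = T̃λ(a⊗b)(1⊗t(x))` and `T̃ρ(a⊗t(y)b) = T̃ρ(a⊗b)(s(y)⊗1)`. -/
def condL1 (D : BaseData A B) (Tl Tr : A ⊗[ℂ] A →ₗ[ℂ] A ⊗[ℂ] A) : Prop :=
  (∀ (x : B) (a b : A),
      Tl ((D.s x).L a ⊗ₜ[ℂ] b) -
        TensorProduct.map LinearMap.id (D.t x).R (Tl (a ⊗ₜ[ℂ] b)) ∈ D.relB) ∧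
  (∀ (y : B) (a b : A),
      Tr (a ⊗ₜ[ℂ] (D.t y).L b) -
        TensorProduct.map (D.s y).R LinearMap.id (Tr (a ⊗ₜ[ℂ] b)) ∈ D.relB)

/-- (L2λ): `T̃λ(a ⊗ s(x)t(y)b s(x′)t(y′)) = (t(y)⊗s(x))·T̃λ(t(y′)a⊗b)·(1⊗s(x′))`. -/
def condL2lam (D : BaseData A B) (Tl : A ⊗[ℂ] A →ₗ[ℂ] A ⊗[ℂ] A) : Prop :=
  ∀ (a b : A) (x x' y y' : B),
    Tl (a ⊗ₜ[ℂ] ((D.s x).L ((D.t y).L ((D.t y').R ((D.s x').R b))))) -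
      TensorProduct.map (D.t y).L (D.s x).L
        (TensorProduct.map LinearMap.id (D.s x').R (Tl ((D.t y').L a ⊗ₜ[ℂ] b))) ∈ D.relB

/-- (L2ρ): `T̃ρ(s(x)t(y)a s(x′)t(y′) ⊗ b) = (t(y)⊗s(x))·T̃ρ(a⊗s(x′)b)·(t(y′)⊗1)`. -/
def condL2rho (D : BaseData A B) (Tr : A ⊗[ℂ] A →ₗ[ℂ] A ⊗[ℂ] A) : Prop :=
  ∀ (a b : A) (x x' y y' : B),
    Tr (((D.s x).L ((D.t y).L ((D.t y').R ((D.s x').R a)))) ⊗ₜ[ℂ] b) -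
      TensorProduct.map (D.t y).L (D.s x).L
        (TensorProduct.map (D.t y').R LinearMap.id (Tr (a ⊗ₜ[ℂ] (D.s x').L b))) ∈ D.relB

/-- (L3): `T̃λ(a⊗b)·(1⊗c) = T̃ρ(b⊗c)·(a⊗1)`. -/
def condL3 (D : BaseData A B) (Tl Tr : A ⊗[ℂ] A →ₗ[ℂ] A ⊗[ℂ] A) : Prop :=
  ∀ a b c : A, rmul₂ c (Tl (a ⊗ₜ[ℂ] b)) - rmul₁ a (Tr (b ⊗ₜ[ℂ] c)) ∈ D.relB

/-- (L4): `T̃λ(ba⊗c) = T̃λ(b⊗c)·(a⊗1)` and `T̃ρ(a⊗bc) = T̃ρ(a⊗b)·(1⊗c)`. -/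
def condL4 (D : BaseData A B) (Tl Tr : A ⊗[ℂ] A →ₗ[ℂ] A ⊗[ℂ] A) : Prop :=
  (∀ a b c : A, Tl ((b * a) ⊗ₜ[ℂ] c) - rmul₁ a (Tl (b ⊗ₜ[ℂ] c)) ∈ D.relB) ∧
  (∀ a b c : A, Tr (a ⊗ₜ[ℂ] (b * c)) - rmul₂ c (Tr (a ⊗ₜ[ℂ] b)) ∈ D.relB)

/-- (L5λ): whenever `u = Σⱼ uⱼ⊗vⱼ` represents `T̃λ(a⊗c)`, one has
`T̃λ(a ⊗ bc) = Σⱼ T̃λ(uⱼ⊗b)·(1⊗vⱼ)`. -/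
def condL5lam (D : BaseData A B) (Tl : A ⊗[ℂ] A →ₗ[ℂ] A ⊗[ℂ] A) : Prop :=
  ∀ (a b c : A) (u : A ⊗[ℂ] A), u - Tl (a ⊗ₜ[ℂ] c) ∈ D.relB →
    Tl (a ⊗ₜ[ℂ] (b * c)) -
      mulIn23 (TensorProduct.map (Tl ∘ₗ tmulR b) LinearMap.id u) ∈ D.relB

/-- (L5ρ): whenever `u = Σⱼ uⱼ⊗vⱼ` represents `T̃ρ(b⊗c)`, one has
`T̃ρ(ab ⊗ c) = Σⱼ T̃ρ(a⊗vⱼ)·(uⱼ⊗1)`. -/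
def condL5rho (D : BaseData A B) (Tr : A ⊗[ℂ] A →ₗ[ℂ] A ⊗[ℂ] A) : Prop :=
  ∀ (a b c : A) (u : A ⊗[ℂ] A), u - Tr (b ⊗ₜ[ℂ] c) ∈ D.relB →
    Tr ((a * b) ⊗ₜ[ℂ] c) -
      mulIn1 (TensorProduct.map LinearMap.id (Tr ∘ₗ tmulL a) u) ∈ D.relB

/-- The subspace of `A ⊗ A ⊗ A` by which one quotients to obtain the two-sided balanced
triple tensor product: the span of all `s(x)a⊗b⊗c − a⊗t(x)b⊗c` and
`a⊗s(x)b⊗c − a⊗b⊗t(x)c`. -/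
def BaseData.span₃ (D : BaseData A B) : Submodule ℂ (A ⊗[ℂ] (A ⊗[ℂ] A)) :=
  Submodule.span ℂ
    ({w : A ⊗[ℂ] (A ⊗[ℂ] A) | ∃ (x : B) (a b c : A),
        w = (D.s x).L a ⊗ₜ[ℂ] (b ⊗ₜ[ℂ] c) - a ⊗ₜ[ℂ] ((D.t x).L b ⊗ₜ[ℂ] c)} ∪
     {w : A ⊗[ℂ] (A ⊗[ℂ] A) | ∃ (x : B) (a b c : A),
        w = a ⊗ₜ[ℂ] ((D.s x).L b ⊗ₜ[ℂ] c) - a ⊗ₜ[ℂ] (b ⊗ₜ[ℂ] (D.t x).L c)})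

/-- (L6): mixed coassociativity; whenever `u` represents `T̃ρ(b⊗c)` and `p` represents
`T̃λ(a⊗b)`, the elements `Σⱼ T̃λ(a⊗uⱼ)⊗vⱼ` and `Σₖ pₖ⊗T̃ρ(qₖ⊗c)` agree in the
balanced triple tensor product. -/
def condL6 (D : BaseData A B) (Tl Tr : A ⊗[ℂ] A →ₗ[ℂ] A ⊗[ℂ] A) : Prop :=
  ∀ (a b c : A) (u p : A ⊗[ℂ] A), u - Tr (b ⊗ₜ[ℂ] c) ∈ D.relB →
    p - Tl (a ⊗ₜ[ℂ] b) ∈ D.relB →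
    (TensorProduct.assoc ℂ A A A)
        (TensorProduct.map (Tl ∘ₗ tmulL a) LinearMap.id u) -
      TensorProduct.map LinearMap.id (Tr ∘ₗ tmulR c) p ∈ D.span₃

/-- A left multiplier bialgebroid, presented by its canonical maps. -/
def IsLeftBialgebroid (D : BaseData A B) (Tl Tr : A ⊗[ℂ] A →ₗ[ℂ] A ⊗[ℂ] A) : Prop :=
  condA3 D ∧ condL1 D Tl Tr ∧ condL2lam D Tl ∧ condL2rho D Tr ∧ condL3 D Tl Tr ∧
    condL4 D Tl Tr ∧ condL5lam D Tl ∧ condL5rho D Tr ∧ condL6 D Tl Tr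

/-- A left counit for a left multiplier bialgebroid. -/
def IsLeftCounit (D : BaseData A B) (Tl Tr : A ⊗[ℂ] A →ₗ[ℂ] A ⊗[ℂ] A)
    (ε : A →ₗ[ℂ] B) : Prop :=
  (∀ (x : B) (a : A), ε ((D.s x).L a) = x * ε a) ∧
  (∀ (y : B) (a : A), ε ((D.t y).L a) = ε a * y) ∧
  (∀ (a b : A) (n : ℕ) (uu vv : Fin n → A),
      (∑ j, uu j ⊗ₜ[ℂ] vv j) - Tr (a ⊗ₜ[ℂ] b) ∈ D.relB →
      ∑ j, (D.t (ε (uu j))).L (vv j) = a * b) ∧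
  (∀ (a b : A) (n : ℕ) (uu vv : Fin n → A),
      (∑ j, uu j ⊗ₜ[ℂ] vv j) - Tl (a ⊗ₜ[ℂ] b) ∈ D.relB →
      ∑ j, (D.s (ε (vv j))).L (uu j) = a * b)

/-- The domain relation for the canonical map `Tλ`: the span of all
`t(x)a ⊗ b − a ⊗ b·t(x)`. -/
def relLam (D : BaseData A B) : Submodule ℂ (A ⊗[ℂ] A) :=
  Submodule.span ℂ
    {z : A ⊗[ℂ] A | ∃ (x : B) (a b : A), z = (D.t x).L a ⊗ₜ[ℂ] b - a ⊗ₜ[ℂ] (D.t x).R b}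

/-- The domain relation for the canonical map `Tρ`: the span of all
`a·s(x) ⊗ b − a ⊗ s(x)b`. -/
def relRho (D : BaseData A B) : Submodule ℂ (A ⊗[ℂ] A) :=
  Submodule.span ℂ
    {z : A ⊗[ℂ] A | ∃ (x : B) (a b : A), z = (D.s x).R a ⊗ₜ[ℂ] b - a ⊗ₜ[ℂ] (D.s x).L b}

/-- The left ideal `Iˢ ⊆ B`. -/
def IdlS (D : BaseData A B) : Submodule ℂ B :=
  Submodule.span ℂ
    {z : B | ∃ φ : A →ₗ[ℂ] B, (∀ (x : B) (a : A), φ ((D.s x).L a) = x * φ a) ∧ ∃ a, z = φ a}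

/-- The right ideal `Iᵗ ⊆ B`. -/
def IdlT (D : BaseData A B) : Submodule ℂ B :=
  Submodule.span ℂ
    {z : B | ∃ ψ : A →ₗ[ℂ] B, (∀ (x : B) (a : A), ψ ((D.t x).L a) = ψ a * x) ∧ ∃ a, z = ψ a}

/-- The elements witnessing left-fullness. -/
def leftFullSet (D : BaseData A B) (Tr : A ⊗[ℂ] A →ₗ[ℂ] A ⊗[ℂ] A) : Set A :=
  {z : A | ∃ ψ : A →ₗ[ℂ] B, (∀ (x : B) (a : A), ψ ((D.t x).L a) = ψ a * x) ∧
    ∃ (a b : A) (n : ℕ) (uu vv : Fin n → A),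
      (∑ j, uu j ⊗ₜ[ℂ] vv j) - Tr (a ⊗ₜ[ℂ] b) ∈ D.relB ∧
      z = ∑ j, (D.s (ψ (vv j))).L (uu j)}

/-- The elements witnessing right-fullness. -/
def rightFullSet (D : BaseData A B) (Tl : A ⊗[ℂ] A →ₗ[ℂ] A ⊗[ℂ] A) : Set A :=
  {z : A | ∃ φ : A →ₗ[ℂ] B, (∀ (x : B) (a : A), φ ((D.s x).L a) = x * φ a) ∧
    ∃ (a b : A) (n : ℕ) (uu vv : Fin n → A),
      (∑ j, uu j ⊗ₜ[ℂ] vv j) - Tl (a ⊗ₜ[ℂ] b) ∈ D.relB ∧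
      z = ∑ j, (D.t (φ (uu j))).L (vv j)}

theorem LinearMap.range_le_of_span_eq_top {R M N : Type*} [Semiring R] [AddCommMonoid M]
    [AddCommMonoid N] [Module R M] [Module R N] (f : M →ₗ[R] N) {S : Set M}
    (hS : Submodule.span R S = ⊤) {P : Submodule R N} (h : ∀ m ∈ S, f m ∈ P) : LinearMap.range f ≤ P := by
  rw [LinearMap.range_eq_map, ← hS, Submodule.map_span_le]
  exact h

namespace BaseData

variable (D : BaseData A B)

def relBOn (B₀ : Submodule ℂ B) : Submodule ℂ (A ⊗[ℂ] A) :=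
  Submodule.span ℂ {z : A ⊗[ℂ] A | ∃ (x : B) (a b : A),
    x ∈ B₀ ∧ z = (D.s x).L a ⊗ₜ[ℂ] b - a ⊗ₜ[ℂ] (D.t x).L b}

theorem relBOn_le_relB (B₀ : Submodule ℂ B) : D.relBOn B₀ ≤ D.relB :=
  Submodule.span_mono fun _ ⟨x, a, b, _, h⟩ => ⟨x, a, b, h⟩

/-- Since `b ↦ s(x)a ⊗ b − a ⊗ t(x)b` is linear and `t(B₀)A` spans `A`, it suffices to take
`b = t(x₀)b'`; then `x₀ x ∈ B₀` and the generator splits as the difference of the `B₀`-generators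
for `(x₀ x, a, b')` and `(x₀, s(x)a, b')`. -/
theorem relB_le_relBOn (B₀ : Submodule ℂ B) (hB₀ : ∀ b ∈ B₀, ∀ y : B, b * y ∈ B₀)
    (ht : Submodule.span ℂ {z : A | ∃ (x : B) (a : A), x ∈ B₀ ∧ z = (D.t x).L a} = ⊤) :
    D.relB ≤ D.relBOn B₀ := by
  rw [relB, Submodule.span_le]
  rintro _ ⟨x, a, b, rfl⟩
  let f : A →ₗ[ℂ] A ⊗[ℂ] A :=
    TensorProduct.mk ℂ A A ((D.s x).L a) - TensorProduct.mk ℂ A A a ∘ₗ (D.t x).L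
  refine f.range_le_of_span_eq_top ht ?_ ⟨b, rfl⟩
  rintro _ ⟨x₀, b', hx₀, rfl⟩
  have hs_mul : (D.s (x₀ * x)).L a = (D.s x₀).L ((D.s x).L a) := by rw [D.s_mul]; rfl
  have ht_mul : (D.t (x₀ * x)).L b' = (D.t x).L ((D.t x₀).L b') := by rw [D.t_mul]; rfl
  have hsplit : f ((D.t x₀).L b') =
      ((D.s (x₀ * x)).L a ⊗ₜ[ℂ] b' - a ⊗ₜ[ℂ] (D.t (x₀ * x)).L b') -
        ((D.s x₀).L ((D.s x).L a) ⊗ₜ[ℂ] b' - (D.s x).L a ⊗ₜ[ℂ] (D.t x₀).L b') := by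
    simp only [f, LinearMap.sub_apply, LinearMap.comp_apply, TensorProduct.mk_apply,
      hs_mul, ht_mul]
    abel
  rw [hsplit]
  exact sub_mem (Submodule.subset_span ⟨x₀ * x, a, b', hB₀ x₀ hx₀ x, rfl⟩)
    (Submodule.subset_span ⟨x₀, (D.s x).L a, b', hx₀, rfl⟩)

theorem range_le_of_apply_s_eq_mul {B₀ : Submodule ℂ B}
    (hB₀ : ∀ b ∈ B₀, ∀ y : B, b * y ∈ B₀)
    (hs : Submodule.span ℂ {z : A | ∃ (x : B) (a : A), x ∈ B₀ ∧ z = (D.s x).L a} = ⊤)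
    {ε : A →ₗ[ℂ] B} (hε : ∀ (x : B) (a : A), ε ((D.s x).L a) = x * ε a) :
    LinearMap.range ε ≤ B₀ := by
  refine ε.range_le_of_span_eq_top hs ?_
  rintro _ ⟨x₀, a, hx₀, rfl⟩
  rw [hε]
  exact hB₀ x₀ hx₀ (ε a)

end BaseData

/-- restriction to an ideal `B₀ ⊆ B` with `s(B₀)A = A = t(B₀)A` does not
change the balanced tensor product, and every `s`-compatible map `ε` takes values
in `B₀`. -/
theorem stmt9 (D : BaseData A B) (B₀ : Submodule ℂ B)
    (hIdeal : ∀ x : B, ∀ b ∈ B₀, x * b ∈ B₀ ∧ b * x ∈ B₀)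
    (hs : Submodule.span ℂ {z : A | ∃ (x : B) (a : A), x ∈ B₀ ∧ z = (D.s x).L a} = ⊤)
    (ht : Submodule.span ℂ {z : A | ∃ (x : B) (a : A), x ∈ B₀ ∧ z = (D.t x).L a} = ⊤) :
    (Submodule.span ℂ {z : A ⊗[ℂ] A | ∃ (x : B) (a b : A),
        z = (D.s x).L a ⊗ₜ[ℂ] b - a ⊗ₜ[ℂ] (D.t x).L b} =
      Submodule.span ℂ {z : A ⊗[ℂ] A | ∃ (x : B) (a b : A),
        x ∈ B₀ ∧ z = (D.s x).L a ⊗ₜ[ℂ] b - a ⊗ₜ[ℂ] (D.t x).L b}) ∧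
    (∀ ε : A →ₗ[ℂ] B, (∀ (x : B) (a : A), ε ((D.s x).L a) = x * ε a) →
      LinearMap.range ε ≤ B₀) := by
  have hB₀ : ∀ b ∈ B₀, ∀ y : B, b * y ∈ B₀ := fun b hb y => (hIdeal y b hb).2
  exact ⟨le_antisymm (D.relB_le_relBOn B₀ hB₀ ht) (D.relBOn_le_relB B₀),
    fun _ hε => D.range_le_of_apply_s_eq_mul hB₀ hs hε⟩

end LeftBgd
end
end

section
/- Set Iˢ:=span{φ(a) : a∈A, φ:A→B linear with φ(s(x)a′)=xφ(a′) for all x∈B, a′∈A} and Iᵗ:=span{ψ(a) : a∈A, ψ:A→B linear with ψ(t(x)a′)=ψ(a′)x for all x∈B, a′∈A}. If the spans of s(Iᵗ)A and of t(Iˢ)A equal A, then Iˢ = Iᵗ = span(Iᵗ·Iˢ), and this subspace is an idempotent, essential two-sided ideal of B: it is an ideal, it equals the span of its products with itself, and for x∈B, xIˢ=0 implies x=0 and Iˢx=0 implies x=0. -/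
/-!
Precomposing a map `φ` defining `Iˢ` with `s(x)` multiplies it by `x` on the left, so `Iˢ` is
a left ideal; symmetrically `Iᵗ` is a right ideal, hence `span(Iᵗ·Iˢ) ⊆ Iˢ ∩ Iᵗ`. Conversely,
writing `a = Σ s(yᵢ)aᵢ` with `yᵢ ∈ Iᵗ` gives `φ(a) = Σ yᵢ φ(aᵢ) ∈ span(Iᵗ·Iˢ)`, and likewise
`ψ(a) ∈ span(Iᵗ·Iˢ)` using `t(Iˢ)A = A`. Finally, if `x·Iˢ = 0` then `s(x)` kills every
`s(y)a` with `y ∈ Iᵗ = Iˢ`, hence all of `A`, and `x = 0` by faithfulness of `s`.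
-/

open scoped TensorProduct

noncomputable section

section LeftBgd

variable {A B : Type*}
  [NonUnitalRing A] [Module ℂ A] [SMulCommClass ℂ A A] [IsScalarTower ℂ A A]
  [NonUnitalRing B] [Module ℂ B] [SMulCommClass ℂ B B] [IsScalarTower ℂ B B]

lemma LinearMap.apply_mem_of_span_eq_top {R M N : Type*} [Semiring R] [AddCommMonoid M]
    [Module R M] [AddCommMonoid N] [Module R N] {S : Set M} (hS : Submodule.span R S = ⊤)
    (f : M →ₗ[R] N) {P : Submodule R N} (h : ∀ a ∈ S, f a ∈ P) (a : M) : f a ∈ P := by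
  have hle : Submodule.span R S ≤ P.comap f := Submodule.span_le.2 h
  rw [hS] at hle
  exact hle Submodule.mem_top

namespace BaseData

variable (D : BaseData A B)

lemma s_L_zero : (D.s 0).L = 0 := by
  have h : D.s 0 = D.s 0 + D.s 0 := by rw [← D.s_add, add_zero]
  exact left_eq_add.1 (congrArg Mult.L h)

lemma t_L_zero : (D.t 0).L = 0 := by
  have h : D.t 0 = D.t 0 + D.t 0 := by rw [← D.t_add, add_zero]
  exact left_eq_add.1 (congrArg Mult.L h)

lemma s_mul_L (x y : B) (a : A) : (D.s (x * y)).L a = (D.s x).L ((D.s y).L a) := by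
  rw [D.s_mul]; rfl

lemma t_mul_L (x y : B) (a : A) : (D.t (x * y)).L a = (D.t y).L ((D.t x).L a) := by
  rw [D.t_mul]; rfl

lemma eq_zero_of_mul_eq_zero_of_span_s {I : Submodule ℂ B}
    (hI : Submodule.span ℂ {z : A | ∃ (x : B) (a : A), x ∈ I ∧ z = (D.s x).L a} = ⊤)
    {x : B} (hx : ∀ i ∈ I, x * i = 0) : x = 0 := by
  have hL : (D.s x).L = 0 := LinearMap.ext_on hI <| by
    rintro _ ⟨y, a, hy, rfl⟩
    rw [LinearMap.zero_apply, ← s_mul_L, hx y hy, s_L_zero, LinearMap.zero_apply]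
  exact D.s_faithful x fun a => by rw [hL, LinearMap.zero_apply]

lemma eq_zero_of_mul_eq_zero_of_span_t {I : Submodule ℂ B}
    (hI : Submodule.span ℂ {z : A | ∃ (x : B) (a : A), x ∈ I ∧ z = (D.t x).L a} = ⊤)
    {x : B} (hx : ∀ i ∈ I, i * x = 0) : x = 0 := by
  have hL : (D.t x).L = 0 := LinearMap.ext_on hI <| by
    rintro _ ⟨y, a, hy, rfl⟩
    rw [LinearMap.zero_apply, ← t_mul_L, hx y hy, t_L_zero, LinearMap.zero_apply]
  exact D.t_faithful x fun a => by rw [hL, LinearMap.zero_apply]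

end BaseData

lemma IdlS_mul_left (D : BaseData A B) (b : B) {i : B} (hi : i ∈ IdlS D) :
    b * i ∈ IdlS D := by
  induction hi using Submodule.span_induction with
  | mem z hz =>
    obtain ⟨φ, hφ, a, rfl⟩ := hz
    exact Submodule.subset_span ⟨φ, hφ, _, (hφ b a).symm⟩
  | zero => simp
  | add x y _ _ hx hy => rw [mul_add]; exact add_mem hx hy
  | smul c x _ hx => rw [mul_smul_comm]; exact Submodule.smul_mem _ c hx

lemma IdlT_mul_right (D : BaseData A B) (b : B) {i : B} (hi : i ∈ IdlT D) :
    i * b ∈ IdlT D := by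
  induction hi using Submodule.span_induction with
  | mem z hz =>
    obtain ⟨ψ, hψ, a, rfl⟩ := hz
    exact Submodule.subset_span ⟨ψ, hψ, _, (hψ b a).symm⟩
  | zero => simp
  | add x y _ _ hx hy => rw [add_mul]; exact add_mem hx hy
  | smul c x _ hx => rw [smul_mul_assoc]; exact Submodule.smul_mem _ c hx

lemma IdlS_le_span_mul (D : BaseData A B) {I : Submodule ℂ B}
    (hI : Submodule.span ℂ {z : A | ∃ (x : B) (a : A), x ∈ I ∧ z = (D.s x).L a} = ⊤) :
    IdlS D ≤ Submodule.span ℂ {z : B | ∃ y ∈ I, ∃ x ∈ IdlS D, z = y * x} := by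
  refine Submodule.span_le.2 ?_
  rintro _ ⟨φ, hφ, a, rfl⟩
  refine φ.apply_mem_of_span_eq_top hI ?_ a
  rintro _ ⟨y, a', hy, rfl⟩
  rw [hφ]
  exact Submodule.subset_span ⟨y, hy, φ a', Submodule.subset_span ⟨φ, hφ, a', rfl⟩, rfl⟩

lemma IdlT_le_span_mul (D : BaseData A B) {I : Submodule ℂ B}
    (hI : Submodule.span ℂ {z : A | ∃ (x : B) (a : A), x ∈ I ∧ z = (D.t x).L a} = ⊤) :
    IdlT D ≤ Submodule.span ℂ {z : B | ∃ y ∈ IdlT D, ∃ x ∈ I, z = y * x} := by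
  refine Submodule.span_le.2 ?_
  rintro _ ⟨ψ, hψ, a, rfl⟩
  refine ψ.apply_mem_of_span_eq_top hI ?_ a
  rintro _ ⟨x, a', hx, rfl⟩
  rw [hψ]
  exact Submodule.subset_span ⟨ψ a', Submodule.subset_span ⟨ψ, hψ, a', rfl⟩, x, hx, rfl⟩

/-- if `s(Iᵗ)A = A = t(Iˢ)A` then `Iˢ = Iᵗ = span(Iᵗ·Iˢ)` is an idempotent,
essential two-sided ideal of `B`. -/
theorem stmt10 (D : BaseData A B)
    (hs : Submodule.span ℂ {z : A | ∃ (x : B) (a : A), x ∈ IdlT D ∧ z = (D.s x).L a} = ⊤)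
    (ht : Submodule.span ℂ {z : A | ∃ (x : B) (a : A), x ∈ IdlS D ∧ z = (D.t x).L a} = ⊤) :
    IdlS D = IdlT D ∧
    IdlS D = Submodule.span ℂ {z : B | ∃ y ∈ IdlT D, ∃ x ∈ IdlS D, z = y * x} ∧
    (∀ b : B, ∀ i ∈ IdlS D, b * i ∈ IdlS D ∧ i * b ∈ IdlS D) ∧
    IdlS D = Submodule.span ℂ {z : B | ∃ i ∈ IdlS D, ∃ j ∈ IdlS D, z = i * j} ∧
    (∀ x : B, (∀ i ∈ IdlS D, x * i = 0) → x = 0) ∧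
    (∀ x : B, (∀ i ∈ IdlS D, i * x = 0) → x = 0) := by
  have hSJ := le_antisymm (IdlS_le_span_mul D hs) <| Submodule.span_le.2 <| by
    rintro _ ⟨y, -, x, hx, rfl⟩
    exact IdlS_mul_left D y hx
  have hTJ := le_antisymm (IdlT_le_span_mul D ht) <| Submodule.span_le.2 <| by
    rintro _ ⟨y, hy, x, -, rfl⟩
    exact IdlT_mul_right D x hy
  have hST : IdlS D = IdlT D := hSJ.trans hTJ.symm
  refine ⟨hST, hSJ, fun b i hi => ⟨IdlS_mul_left D b hi, ?_⟩, ?_, fun x hx => ?_,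
    fun x hx => D.eq_zero_of_mul_eq_zero_of_span_t ht hx⟩
  · rw [hST] at hi ⊢
    exact IdlT_mul_right D b hi
  · simpa only [← hST] using hSJ
  · rw [hST] at hx
    exact D.eq_zero_of_mul_eq_zero_of_span_s hs hx

end LeftBgd
end
end

section
/- Let 𝒜 be a regular multiplier Hopf algebroid which is additionally a multiplier Hopf *-algebroid, i.e. A carries an involution a↦a* (conjugate-linear, (ab)*=b*a*, (a*)*=a) such that B and C are *-closed in M(A) (for x∈B the multiplier x* defined by x*a:=(a*x)* and ax*:=(xa*)* again lies in B, and similarly for C), S_B((S_C(y*))*)=y for all y∈C, S_C((S_B(x*))*)=x for all x∈B, and for all a,b∈A: if Σⱼuⱼ⊗vⱼ∈A⊗A represents T̃λ(a⊗b) then λT̃(a*⊗b*)=Σⱼuⱼ*⊗vⱼ* in A⊗̲A, and if Σⱼuⱼ⊗vⱼ represents T̃ρ(a⊗b) then ρT̃(a*⊗b*)=Σⱼuⱼ*⊗vⱼ* in A⊗̲A. Then the left counit ε_B, the right counit ε_C and the invertible antipode S of 𝒜 satisfy ε_C(a*) = (S_B(ε_B(a)))*, ε_B(a*) = (S_C(ε_C(a)))*,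 and S((S(a*))*) = a for all a∈A. -/
open scoped TensorProduct

noncomputable section

/-- The data of a multiplier bialgebroid `𝒜 = (A, B, C, S_B, S_C, T̃λ, T̃ρ, λT̃, ρT̃)`:
subalgebras `B, C ⊆ M(A)` (given by injective algebra homomorphisms `ιB`, `ιC` into the
multiplier algebra with commuting images), algebra anti-isomorphisms `S_B : B → C` and
`S_C : C → B`, and the four (lifted) canonical maps. -/
structure MBgdData (A B C : Type*)
    [NonUnitalRing A] [Module ℂ A] [SMulCommClass ℂ A A] [IsScalarTower ℂ A A]
    [NonUnitalRing B] [Module ℂ B] [SMulCommClass ℂ B B] [IsScalarTower ℂ B B]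
    [NonUnitalRing C] [Module ℂ C] [SMulCommClass ℂ C C] [IsScalarTower ℂ C C] where
  ιB : B → Mult A
  ιC : C → Mult A
  ιB_add : ∀ x y : B, ιB (x + y) = ιB x + ιB y
  ιB_smul : ∀ (c : ℂ) (x : B), ιB (c • x) = c • ιB x
  ιB_mul : ∀ x y : B, ιB (x * y) = ιB x * ιB y
  ιB_inj : Function.Injective ιB
  ιC_add : ∀ x y : C, ιC (x + y) = ιC x + ιC y
  ιC_smul : ∀ (c : ℂ) (x : C), ιC (c • x) = c • ιC x
  ιC_mul : ∀ x y : C, ιC (x * y) = ιC x * ιC y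
  ιC_inj : Function.Injective ιC
  bc_comm : ∀ (x : B) (y : C), ιB x * ιC y = ιC y * ιB x
  A_ndl : ∀ a : A, (∀ b : A, a * b = 0) → a = 0
  A_ndr : ∀ a : A, (∀ b : A, b * a = 0) → a = 0
  A_idem : Submodule.span ℂ {z : A | ∃ a b : A, z = a * b} = ⊤
  B_ndl : ∀ x : B, (∀ a : A, (ιB x).L a = 0) → x = 0
  B_ndr : ∀ x : B, (∀ a : A, (ιB x).R a = 0) → x = 0
  C_ndl : ∀ y : C, (∀ a : A, (ιC y).L a = 0) → y = 0
  C_ndr : ∀ y : C, (∀ a : A, (ιC y).R a = 0) → y = 0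
  BA_span : Submodule.span ℂ {z : A | ∃ (x : B) (a : A), z = (ιB x).L a} = ⊤
  AB_span : Submodule.span ℂ {z : A | ∃ (x : B) (a : A), z = (ιB x).R a} = ⊤
  CA_span : Submodule.span ℂ {z : A | ∃ (y : C) (a : A), z = (ιC y).L a} = ⊤
  AC_span : Submodule.span ℂ {z : A | ∃ (y : C) (a : A), z = (ιC y).R a} = ⊤
  SB : B →ₗ[ℂ] C
  SC : C →ₗ[ℂ] B
  SB_bij : Function.Bijective SB
  SC_bij : Function.Bijective SC
  SB_antimul : ∀ x y : B, SB (x * y) = SB y * SB x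
  SC_antimul : ∀ x y : C, SC (x * y) = SC y * SC x
  Tl : A ⊗[ℂ] A →ₗ[ℂ] A ⊗[ℂ] A
  Tr : A ⊗[ℂ] A →ₗ[ℂ] A ⊗[ℂ] A
  lT : A ⊗[ℂ] A →ₗ[ℂ] A ⊗[ℂ] A
  rT : A ⊗[ℂ] A →ₗ[ℂ] A ⊗[ℂ] A

namespace MBgdData

variable {A B C : Type*}
  [NonUnitalRing A] [Module ℂ A] [SMulCommClass ℂ A A] [IsScalarTower ℂ A A]
  [NonUnitalRing B] [Module ℂ B] [SMulCommClass ℂ B B] [IsScalarTower ℂ B B]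
  [NonUnitalRing C] [Module ℂ C] [SMulCommClass ℂ C C] [IsScalarTower ℂ C C]

/-- The relation defining `A ⊗̄ A`: the span of all `xa ⊗ b − a ⊗ S_B(x)b`, `x ∈ B`. -/
def relbar (D : MBgdData A B C) : Submodule ℂ (A ⊗[ℂ] A) :=
  Submodule.span ℂ {z : A ⊗[ℂ] A | ∃ (x : B) (a b : A),
    z = (D.ιB x).L a ⊗ₜ[ℂ] b - a ⊗ₜ[ℂ] (D.ιC (D.SB x)).L b}

/-- The relation defining `A ⊗̲ A`: the span of all `aS_C(y) ⊗ b − a ⊗ by`, `y ∈ C`. -/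
def relund (D : MBgdData A B C) : Submodule ℂ (A ⊗[ℂ] A) :=
  Submodule.span ℂ {z : A ⊗[ℂ] A | ∃ (y : C) (a b : A),
    z = (D.ιB (D.SC y)).R a ⊗ₜ[ℂ] b - a ⊗ₜ[ℂ] (D.ιC y).R b}

/-- `A ⊗̄ A` is non-degenerate for the right multiplications `w ↦ w(c⊗1)`, `w ↦ w(1⊗c)`. -/
def ndbar (D : MBgdData A B C) : Prop :=
  (∀ u : A ⊗[ℂ] A, (∀ c : A, rmul₁ c u ∈ D.relbar) → u ∈ D.relbar) ∧
  (∀ u : A ⊗[ℂ] A, (∀ c : A, rmul₂ c u ∈ D.relbar) → u ∈ D.relbar)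

/-- `A ⊗̲ A` is non-degenerate for the left multiplications `w ↦ (c⊗1)w`, `w ↦ (1⊗c)w`. -/
def ndund (D : MBgdData A B C) : Prop :=
  (∀ u : A ⊗[ℂ] A, (∀ c : A, lmul₁ c u ∈ D.relund) → u ∈ D.relund) ∧
  (∀ u : A ⊗[ℂ] A, (∀ c : A, lmul₂ c u ∈ D.relund) → u ∈ D.relund)

/-- (L1). -/
def cL1 (D : MBgdData A B C) : Prop :=
  (∀ (x : B) (a b : A),
      D.Tl ((D.ιB x).L a ⊗ₜ[ℂ] b) -
        TensorProduct.map LinearMap.id (D.ιC (D.SB x)).R (D.Tl (a ⊗ₜ[ℂ] b)) ∈ D.relbar) ∧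
  (∀ (x : B) (a b : A),
      D.Tr (a ⊗ₜ[ℂ] (D.ιC (D.SB x)).L b) -
        TensorProduct.map (D.ιB x).R LinearMap.id (D.Tr (a ⊗ₜ[ℂ] b)) ∈ D.relbar)

/-- (L2). -/
def cL2 (D : MBgdData A B C) : Prop :=
  (∀ (a b : A) (x x' : B) (y y' : C),
      D.Tl (a ⊗ₜ[ℂ] ((D.ιB x).L ((D.ιC y).L ((D.ιC y').R ((D.ιB x').R b))))) -
        TensorProduct.map (D.ιC y).L (D.ιB x).L
          (TensorProduct.map LinearMap.id (D.ιB x').R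
            (D.Tl ((D.ιC y').L a ⊗ₜ[ℂ] b))) ∈ D.relbar) ∧
  (∀ (a b : A) (x x' : B) (y y' : C),
      D.Tr (((D.ιB x).L ((D.ιC y).L ((D.ιC y').R ((D.ιB x').R a)))) ⊗ₜ[ℂ] b) -
        TensorProduct.map (D.ιC y).L (D.ιB x).L
          (TensorProduct.map (D.ιC y').R LinearMap.id
            (D.Tr (a ⊗ₜ[ℂ] (D.ιB x').L b))) ∈ D.relbar)

/-- (L3). -/
def cL3 (D : MBgdData A B C) : Prop :=
  ∀ a b c : A, rmul₂ c (D.Tl (a ⊗ₜ[ℂ] b)) - rmul₁ a (D.Tr (b ⊗ₜ[ℂ] c)) ∈ D.relbar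

/-- (L4). -/
def cL4 (D : MBgdData A B C) : Prop :=
  (∀ a b c : A, D.Tl ((b * a) ⊗ₜ[ℂ] c) - rmul₁ a (D.Tl (b ⊗ₜ[ℂ] c)) ∈ D.relbar) ∧
  (∀ a b c : A, D.Tr (a ⊗ₜ[ℂ] (b * c)) - rmul₂ c (D.Tr (a ⊗ₜ[ℂ] b)) ∈ D.relbar)

/-- (L5). -/
def cL5 (D : MBgdData A B C) : Prop :=
  (∀ (a b c : A) (u : A ⊗[ℂ] A), u - D.Tl (a ⊗ₜ[ℂ] c) ∈ D.relbar →
      D.Tl (a ⊗ₜ[ℂ] (b * c)) -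
        mulIn23 (TensorProduct.map (D.Tl ∘ₗ tmulR b) LinearMap.id u) ∈ D.relbar) ∧
  (∀ (a b c : A) (u : A ⊗[ℂ] A), u - D.Tr (b ⊗ₜ[ℂ] c) ∈ D.relbar →
      D.Tr ((a * b) ⊗ₜ[ℂ] c) -
        mulIn1 (TensorProduct.map LinearMap.id (D.Tr ∘ₗ tmulL a) u) ∈ D.relbar)

/-- The relation for the triple balanced tensor product appearing in (L6). -/
def span₃L (D : MBgdData A B C) : Submodule ℂ (A ⊗[ℂ] (A ⊗[ℂ] A)) :=
  Submodule.span ℂ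
    ({w : A ⊗[ℂ] (A ⊗[ℂ] A) | ∃ (x : B) (a b c : A),
        w = (D.ιB x).L a ⊗ₜ[ℂ] (b ⊗ₜ[ℂ] c) - a ⊗ₜ[ℂ] ((D.ιC (D.SB x)).L b ⊗ₜ[ℂ] c)} ∪
     {w : A ⊗[ℂ] (A ⊗[ℂ] A) | ∃ (x : B) (a b c : A),
        w = a ⊗ₜ[ℂ] ((D.ιB x).L b ⊗ₜ[ℂ] c) - a ⊗ₜ[ℂ] (b ⊗ₜ[ℂ] (D.ιC (D.SB x)).L c)})

/-- (L6). -/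
def cL6 (D : MBgdData A B C) : Prop :=
  ∀ (a b c : A) (u p : A ⊗[ℂ] A), u - D.Tr (b ⊗ₜ[ℂ] c) ∈ D.relbar →
    p - D.Tl (a ⊗ₜ[ℂ] b) ∈ D.relbar →
    (TensorProduct.assoc ℂ A A A)
        (TensorProduct.map (D.Tl ∘ₗ tmulL a) LinearMap.id u) -
      TensorProduct.map LinearMap.id (D.Tr ∘ₗ tmulR c) p ∈ D.span₃L

/-- (R1). -/
def cR1 (D : MBgdData A B C) : Prop :=
  (∀ (a b : A) (z w y y' : C),
      D.lT ((D.ιB (D.SC z)).R a ⊗ₜ[ℂ]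
          ((D.ιB (D.SC y')).R ((D.ιC y).R ((D.ιB (D.SC w)).L b)))) -
        TensorProduct.map (D.ιC y).R (D.ιB (D.SC y')).R
          (TensorProduct.map LinearMap.id ((D.ιC z).L ∘ₗ (D.ιB (D.SC w)).L)
            (D.lT (a ⊗ₜ[ℂ] b))) ∈ D.relund) ∧
  (∀ (a b : A) (z w y y' : C),
      D.rT (((D.ιB (D.SC y')).R ((D.ιC y).R ((D.ιC w).L a))) ⊗ₜ[ℂ] ((D.ιC z).R b)) -
        TensorProduct.map (D.ιC y).R (D.ιB (D.SC y')).R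
          (TensorProduct.map ((D.ιC w).L ∘ₗ (D.ιB (D.SC z)).L) LinearMap.id
            (D.rT (a ⊗ₜ[ℂ] b))) ∈ D.relund)

/-- (R3). -/
def cR3 (D : MBgdData A B C) : Prop :=
  ∀ (a b c : A) (u u' : A ⊗[ℂ] A), u - D.lT (a ⊗ₜ[ℂ] b) ∈ D.relund →
    u' - D.rT (b ⊗ₜ[ℂ] c) ∈ D.relund →
    lmul₂ c u - lmul₁ a u' ∈ D.relund

/-- (R4). -/
def cR4 (D : MBgdData A B C) : Prop :=
  (∀ a b c : A, D.lT ((a * b) ⊗ₜ[ℂ] c) - lmul₁ a (D.lT (b ⊗ₜ[ℂ] c)) ∈ D.relund) ∧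
  (∀ a b c : A, D.rT (a ⊗ₜ[ℂ] (c * b)) - lmul₂ c (D.rT (a ⊗ₜ[ℂ] b)) ∈ D.relund)

/-- (R5). -/
def cR5 (D : MBgdData A B C) : Prop :=
  (∀ (a b c : A) (u : A ⊗[ℂ] A), u - D.lT (a ⊗ₜ[ℂ] b) ∈ D.relund →
      D.lT (a ⊗ₜ[ℂ] (b * c)) -
        mulIn23' (TensorProduct.map (D.lT ∘ₗ tmulR c) LinearMap.id u) ∈ D.relund) ∧
  (∀ (a b c : A) (u : A ⊗[ℂ] A), u - D.rT (a ⊗ₜ[ℂ] c) ∈ D.relund →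
      D.rT ((a * b) ⊗ₜ[ℂ] c) -
        mulIn1' (TensorProduct.map LinearMap.id (D.rT ∘ₗ tmulL b) u) ∈ D.relund)

/-- The relation for the triple balanced tensor product appearing in (R6). -/
def span₃R (D : MBgdData A B C) : Submodule ℂ (A ⊗[ℂ] (A ⊗[ℂ] A)) :=
  Submodule.span ℂ
    ({w : A ⊗[ℂ] (A ⊗[ℂ] A) | ∃ (y : C) (a b c : A),
        w = (D.ιB (D.SC y)).R a ⊗ₜ[ℂ] (b ⊗ₜ[ℂ] c) - a ⊗ₜ[ℂ] ((D.ιC y).R b ⊗ₜ[ℂ] c)} ∪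
     {w : A ⊗[ℂ] (A ⊗[ℂ] A) | ∃ (y : C) (a b c : A),
        w = a ⊗ₜ[ℂ] ((D.ιB (D.SC y)).R b ⊗ₜ[ℂ] c) - a ⊗ₜ[ℂ] (b ⊗ₜ[ℂ] (D.ιC y).R c)})

/-- (R6). -/
def cR6 (D : MBgdData A B C) : Prop :=
  ∀ (a b c : A) (u p : A ⊗[ℂ] A), u - D.rT (b ⊗ₜ[ℂ] c) ∈ D.relund →
    p - D.lT (a ⊗ₜ[ℂ] b) ∈ D.relund →
    (TensorProduct.assoc ℂ A A A)
        (TensorProduct.map (D.lT ∘ₗ tmulL a) LinearMap.id u) -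
      TensorProduct.map LinearMap.id (D.rT ∘ₗ tmulR c) p ∈ D.span₃R

/-- The relation for the triple balanced tensor product appearing in (M1). -/
def span₃M1 (D : MBgdData A B C) : Submodule ℂ (A ⊗[ℂ] (A ⊗[ℂ] A)) :=
  Submodule.span ℂ
    ({w : A ⊗[ℂ] (A ⊗[ℂ] A) | ∃ (y : C) (a b c : A),
        w = (D.ιB (D.SC y)).R a ⊗ₜ[ℂ] (b ⊗ₜ[ℂ] c) - a ⊗ₜ[ℂ] ((D.ιC y).R b ⊗ₜ[ℂ] c)} ∪
     {w : A ⊗[ℂ] (A ⊗[ℂ] A) | ∃ (x : B) (a b c : A),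
        w = a ⊗ₜ[ℂ] ((D.ιB x).L b ⊗ₜ[ℂ] c) - a ⊗ₜ[ℂ] (b ⊗ₜ[ℂ] (D.ιC (D.SB x)).L c)})

/-- (M1). -/
def cM1 (D : MBgdData A B C) : Prop :=
  ∀ (a b c : A) (u p : A ⊗[ℂ] A), u - D.Tr (b ⊗ₜ[ℂ] c) ∈ D.relbar →
    p - D.lT (a ⊗ₜ[ℂ] b) ∈ D.relund →
    (TensorProduct.assoc ℂ A A A)
        (TensorProduct.map (D.lT ∘ₗ tmulL a) LinearMap.id u) -
      TensorProduct.map LinearMap.id (D.Tr ∘ₗ tmulR c) p ∈ D.span₃M1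

/-- The relation for the triple balanced tensor product appearing in (M2). -/
def span₃M2 (D : MBgdData A B C) : Submodule ℂ (A ⊗[ℂ] (A ⊗[ℂ] A)) :=
  Submodule.span ℂ
    ({w : A ⊗[ℂ] (A ⊗[ℂ] A) | ∃ (x : B) (a b c : A),
        w = (D.ιB x).L a ⊗ₜ[ℂ] (b ⊗ₜ[ℂ] c) - a ⊗ₜ[ℂ] ((D.ιC (D.SB x)).L b ⊗ₜ[ℂ] c)} ∪
     {w : A ⊗[ℂ] (A ⊗[ℂ] A) | ∃ (y : C) (a b c : A),
        w = a ⊗ₜ[ℂ] ((D.ιB (D.SC y)).R b ⊗ₜ[ℂ] c) - a ⊗ₜ[ℂ] (b ⊗ₜ[ℂ] (D.ιC y).R c)})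

/-- (M2). -/
def cM2 (D : MBgdData A B C) : Prop :=
  ∀ (a b c : A) (u p : A ⊗[ℂ] A), u - D.rT (b ⊗ₜ[ℂ] c) ∈ D.relund →
    p - D.Tl (a ⊗ₜ[ℂ] b) ∈ D.relbar →
    (TensorProduct.assoc ℂ A A A)
        (TensorProduct.map (D.Tl ∘ₗ tmulL a) LinearMap.id u) -
      TensorProduct.map LinearMap.id (D.rT ∘ₗ tmulR c) p ∈ D.span₃M2

/-- `𝒜` is a multiplier bialgebroid. -/
def IsMBialgebroid (D : MBgdData A B C) : Prop :=
  D.ndbar ∧ D.ndund ∧ D.cL1 ∧ D.cL2 ∧ D.cL3 ∧ D.cL4 ∧ D.cL5 ∧ D.cL6 ∧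
    D.cR1 ∧ D.cR3 ∧ D.cR4 ∧ D.cR5 ∧ D.cR6 ∧ D.cM1 ∧ D.cM2

/-- The domain relation of the canonical map `Tλ`: span of `S_B(x)a ⊗ b − a ⊗ bS_B(x)`. -/
def relTlam (D : MBgdData A B C) : Submodule ℂ (A ⊗[ℂ] A) :=
  Submodule.span ℂ {z : A ⊗[ℂ] A | ∃ (x : B) (a b : A),
    z = (D.ιC (D.SB x)).L a ⊗ₜ[ℂ] b - a ⊗ₜ[ℂ] (D.ιC (D.SB x)).R b}

/-- The domain relation of the canonical map `Tρ`: span of `ax ⊗ b − a ⊗ xb`. -/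
def relTrho (D : MBgdData A B C) : Submodule ℂ (A ⊗[ℂ] A) :=
  Submodule.span ℂ {z : A ⊗[ℂ] A | ∃ (x : B) (a b : A),
    z = (D.ιB x).R a ⊗ₜ[ℂ] b - a ⊗ₜ[ℂ] (D.ιB x).L b}

/-- The domain relation of the canonical map `λT`: span of `ay ⊗ b − a ⊗ yb`. -/
def rellT (D : MBgdData A B C) : Submodule ℂ (A ⊗[ℂ] A) :=
  Submodule.span ℂ {z : A ⊗[ℂ] A | ∃ (y : C) (a b : A),
    z = (D.ιC y).R a ⊗ₜ[ℂ] b - a ⊗ₜ[ℂ] (D.ιC y).L b}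

/-- The domain relation of the canonical map `ρT`: span of `S_C(y)a ⊗ b − a ⊗ bS_C(y)`. -/
def relrT (D : MBgdData A B C) : Submodule ℂ (A ⊗[ℂ] A) :=
  Submodule.span ℂ {z : A ⊗[ℂ] A | ∃ (y : C) (a b : A),
    z = (D.ιB (D.SC y)).L a ⊗ₜ[ℂ] b - a ⊗ₜ[ℂ] (D.ιB (D.SC y)).R b}

/-- Bijectivity of the four canonical maps `Tλ, Tρ, λT, ρT`, formulated via
representatives. -/
def canonicalBij (D : MBgdData A B C) : Prop :=
  (∀ u : A ⊗[ℂ] A, D.Tl u ∈ D.relbar → u ∈ D.relTlam) ∧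
  (∀ w : A ⊗[ℂ] A, ∃ u : A ⊗[ℂ] A, D.Tl u - w ∈ D.relbar) ∧
  (∀ u : A ⊗[ℂ] A, D.Tr u ∈ D.relbar → u ∈ D.relTrho) ∧
  (∀ w : A ⊗[ℂ] A, ∃ u : A ⊗[ℂ] A, D.Tr u - w ∈ D.relbar) ∧
  (∀ u : A ⊗[ℂ] A, D.lT u ∈ D.relund → u ∈ D.rellT) ∧
  (∀ w : A ⊗[ℂ] A, ∃ u : A ⊗[ℂ] A, D.lT u - w ∈ D.relund) ∧
  (∀ u : A ⊗[ℂ] A, D.rT u ∈ D.relund → u ∈ D.relrT) ∧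
  (∀ w : A ⊗[ℂ] A, ∃ u : A ⊗[ℂ] A, D.rT u - w ∈ D.relund)

/-- The ideal `I₁ ⊆ B`. -/
def I₁ (D : MBgdData A B C) : Submodule ℂ B :=
  Submodule.span ℂ {z : B | ∃ ω : A →ₗ[ℂ] B,
    (∀ (x : B) (a : A), ω ((D.ιB x).L a) = x * ω a) ∧ ∃ a, z = ω a}

/-- The ideal `I₂ ⊆ B`. -/
def I₂ (D : MBgdData A B C) : Submodule ℂ B :=
  Submodule.span ℂ {z : B | ∃ ω : A →ₗ[ℂ] B,
    (∀ (x : B) (a : A), ω ((D.ιC (D.SB x)).L a) = ω a * x) ∧ ∃ a, z = ω a}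

/-- The ideal `I₃ ⊆ C`. -/
def I₃ (D : MBgdData A B C) : Submodule ℂ C :=
  Submodule.span ℂ {z : C | ∃ ω : A →ₗ[ℂ] C,
    (∀ (y : C) (a : A), ω ((D.ιC y).R a) = ω a * y) ∧ ∃ a, z = ω a}

/-- The ideal `I₄ ⊆ C`. -/
def I₄ (D : MBgdData A B C) : Submodule ℂ C :=
  Submodule.span ℂ {z : C | ∃ ω : A →ₗ[ℂ] C,
    (∀ (y : C) (a : A), ω ((D.ιB (D.SC y)).R a) = y * ω a) ∧ ∃ a, z = ω a}

/-- The fullness conditions: the spans of `S_B(I₁)A`, `I₂A`, `AS_C(I₃)` and `AI₄`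
equal `A`. -/
def fullSpans (D : MBgdData A B C) : Prop :=
  Submodule.span ℂ {z : A | ∃ i ∈ D.I₁, ∃ a : A, z = (D.ιC (D.SB i)).L a} = ⊤ ∧
  Submodule.span ℂ {z : A | ∃ i ∈ D.I₂, ∃ a : A, z = (D.ιB i).L a} = ⊤ ∧
  Submodule.span ℂ {z : A | ∃ i ∈ D.I₃, ∃ a : A, z = (D.ιB (D.SC i)).R a} = ⊤ ∧
  Submodule.span ℂ {z : A | ∃ i ∈ D.I₄, ∃ a : A, z = (D.ιC i).R a} = ⊤

/-- `𝒜` is a regular multiplier Hopf algebroid. -/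
def IsRegular (D : MBgdData A B C) : Prop :=
  D.fullSpans ∧ D.canonicalBij

/-- A left counit. -/
def IsLeftCounit (D : MBgdData A B C) (εB : A →ₗ[ℂ] B) : Prop :=
  (∀ (x : B) (a : A), εB ((D.ιB x).L a) = x * εB a) ∧
  (∀ (x : B) (a : A), εB ((D.ιC (D.SB x)).L a) = εB a * x) ∧
  (∀ (a b : A) (n : ℕ) (uu vv : Fin n → A),
      (∑ j, uu j ⊗ₜ[ℂ] vv j) - D.Tr (a ⊗ₜ[ℂ] b) ∈ D.relbar →
      ∑ j, (D.ιC (D.SB (εB (uu j)))).L (vv j) = a * b) ∧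
  (∀ (a b : A) (n : ℕ) (uu vv : Fin n → A),
      (∑ j, uu j ⊗ₜ[ℂ] vv j) - D.Tl (a ⊗ₜ[ℂ] b) ∈ D.relbar →
      ∑ j, (D.ιB (εB (vv j))).L (uu j) = a * b)

/-- A right counit. -/
def IsRightCounit (D : MBgdData A B C) (εC : A →ₗ[ℂ] C) : Prop :=
  (∀ (y : C) (a : A), εC ((D.ιC y).R a) = εC a * y) ∧
  (∀ (y : C) (a : A), εC ((D.ιB (D.SC y)).R a) = y * εC a) ∧
  (∀ (a b : A) (n : ℕ) (uu vv : Fin n → A),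
      (∑ j, uu j ⊗ₜ[ℂ] vv j) - D.rT (a ⊗ₜ[ℂ] b) ∈ D.relund →
      ∑ j, (D.ιC (εC (uu j))).R (vv j) = b * a) ∧
  (∀ (a b : A) (n : ℕ) (uu vv : Fin n → A),
      (∑ j, uu j ⊗ₜ[ℂ] vv j) - D.lT (a ⊗ₜ[ℂ] b) ∈ D.relund →
      ∑ j, (D.ιB (D.SC (εC (vv j)))).R (uu j) = a * b)

/-- `S` is an invertible antipode with witnessing left counit `εB` and right
counit `εC`. -/
def IsAntipodeWith (D : MBgdData A B C) (S : A ≃ₗ[ℂ] A)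
    (εB : A →ₗ[ℂ] B) (εC : A →ₗ[ℂ] C) : Prop :=
  (∀ a b : A, S (a * b) = S b * S a) ∧
  (∀ (a : A) (x x' : B) (y y' : C),
      S ((D.ιB x).L ((D.ιC y).L ((D.ιC y').R ((D.ιB x').R a)))) =
        (D.ιC (D.SB x)).R ((D.ιB (D.SC y)).R
          ((D.ιB (D.SC y')).L ((D.ιC (D.SB x')).L (S a))))) ∧
  D.IsLeftCounit εB ∧ D.IsRightCounit εC ∧
  (∀ (a b : A) (n : ℕ) (uu vv : Fin n → A),
      (∑ j, uu j ⊗ₜ[ℂ] vv j) - D.Tr (a ⊗ₜ[ℂ] b) ∈ D.relbar →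
      ∑ j, S (uu j) * vv j = (D.ιB (D.SC (εC a))).L b) ∧
  (∀ (a b : A) (n : ℕ) (uu vv : Fin n → A),
      (∑ j, uu j ⊗ₜ[ℂ] vv j) - D.lT (a ⊗ₜ[ℂ] b) ∈ D.relund →
      ∑ j, uu j * S (vv j) = (D.ιC (D.SB (εB b))).R a)

/-- `S` is an invertible antipode. -/
def IsAntipode (D : MBgdData A B C) (S : A ≃ₗ[ℂ] A) : Prop :=
  ∃ (εB : A →ₗ[ℂ] B) (εC : A →ₗ[ℂ] C), D.IsAntipodeWith S εB εC

end MBgdData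

/-! The defining identities of the counits and of the antipode hold for every representative of
`T̃ρ(a ⊗ b)` (resp. `T̃λ`, `λT̃`, `ρT̃`), including the elements of the relations, which represent
`0`. As `T̃ρ` and `T̃λ` are surjective, a linear map on `A ⊗ A` is therefore determined by its
values on such representatives. The involution carries representatives of `T̃ρ(a ⊗ b)` to
representatives of `ρT̃(a* ⊗ b*)`, so `u ⊗ v ↦ S_B(ε_B(u))v` and `u ⊗ v ↦ (v* ε_C(u*))*` both send
them to `ab`; this gives `S_B(ε_B(a)) = ε_C(a*)*`. Likewise, on representatives of `T̃λ(a ⊗ b)`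
both `u ⊗ v ↦ S(u)v` and `u ⊗ v ↦ S((S(v*))* u)` take the value `S(ε_C(b)a)`: the first by (L3)
and the `T̃ρ`-identity of `S`, the second by the `λT̃`-identity of `S` seen through the involution.
Hence `S(u) S((S(v*))*) = S(u)v` for all `u`, and `S((S(v*))*) = v` by non-degeneracy. -/

namespace TensorProduct

variable {R M N : Type*} [CommRing R] [AddCommGroup M] [AddCommGroup N] [Module R M] [Module R N]

theorem exists_fin_sum_tmul (x : M ⊗[R] N) :
    ∃ (n : ℕ) (u : Fin n → M) (v : Fin n → N), x = ∑ j, u j ⊗ₜ[R] v j := by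
  induction x with
  | zero => exact ⟨0, ![], ![], by simp⟩
  | tmul a b => exact ⟨1, ![a], ![b], by simp⟩
  | add x y hx hy =>
    obtain ⟨n, u, v, rfl⟩ := hx
    obtain ⟨m, u', v', rfl⟩ := hy
    exact ⟨n + m, Fin.addCases u u', Fin.addCases v v', by simp [Fin.sum_univ_add]⟩

theorem lift_eq_of_sub_mem {P : Type*} [AddCommGroup P] [Module R P] (f : M →ₗ[R] N →ₗ[R] P)
    {W : Submodule R (M ⊗[R] N)} {t : M ⊗[R] N} {c : P}
    (h : ∀ (n : ℕ) (u : Fin n → M) (v : Fin n → N),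
      (∑ j, u j ⊗ₜ[R] v j) - t ∈ W → ∑ j, f (u j) (v j) = c)
    {w : M ⊗[R] N} (hw : w - t ∈ W) : lift f w = c := by
  obtain ⟨n, u, v, rfl⟩ := exists_fin_sum_tmul w
  simpa using h n u v hw

end TensorProduct

theorem LinearMap.eq_of_eq_on_representatives {R M N Q P : Type*} [CommRing R]
    [AddCommGroup M] [AddCommGroup N] [AddCommGroup Q] [AddCommGroup P]
    [Module R M] [Module R N] [Module R Q] [Module R P]
    (T : M ⊗[R] N →ₗ[R] Q) {W : Submodule R Q} (hT : ∀ q, ∃ u, T u - q ∈ W)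
    {Φ Ψ : Q →ₗ[R] P} (h : ∀ a b q, q - T (a ⊗ₜ b) ∈ W → Φ q = Ψ q) : Φ = Ψ := by
  have hW : ∀ q ∈ W, Φ q = Ψ q := fun q hq => h 0 0 q (by simpa using hq)
  have hTeq : Φ ∘ₗ T = Ψ ∘ₗ T := TensorProduct.ext' fun a b => h a b _ (by simp)
  ext q
  obtain ⟨u, hu⟩ := hT q
  have := hW _ hu
  rwa [map_sub, map_sub, ← LinearMap.comp_apply, hTeq, LinearMap.comp_apply,
    sub_right_inj] at this

theorem LinearMap.ext_comp_of_span_eq_top {R M P ι : Type*} [Semiring R] [AddCommMonoid M]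
    [AddCommMonoid P] [Module R M] [Module R P] {s : ι → M →ₗ[R] M}
    (hs : Submodule.span R {z : M | ∃ (i : ι) (a : M), z = s i a} = ⊤) {F G : M →ₗ[R] P}
    (h : ∀ i, F ∘ₗ s i = G ∘ₗ s i) : F = G := by
  refine LinearMap.ext_on hs ?_
  rintro _ ⟨i, a, rfl⟩
  exact LinearMap.congr_fun (h i) a

section StarStructures

variable {M : Type*} [AddCommGroup M] [Module ℂ M] [StarAddMonoid M] [StarModule ℂ M]

def StarIntertwines (T T' : M ⊗[ℂ] M →ₗ[ℂ] M ⊗[ℂ] M) (W W' : Submodule ℂ (M ⊗[ℂ] M)) : Prop :=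
  ∀ (a b : M) (n : ℕ) (uu vv : Fin n → M), (∑ j, uu j ⊗ₜ[ℂ] vv j) - T (a ⊗ₜ[ℂ] b) ∈ W →
    T' (star a ⊗ₜ[ℂ] star b) - (∑ j, star (uu j) ⊗ₜ[ℂ] star (vv j)) ∈ W'

theorem StarIntertwines.star_sub_mem {T T' : M ⊗[ℂ] M →ₗ[ℂ] M ⊗[ℂ] M}
    {W W' : Submodule ℂ (M ⊗[ℂ] M)} (h : StarIntertwines T T' W W') {a b : M}
    {q : M ⊗[ℂ] M} (hq : q - T (a ⊗ₜ b) ∈ W) : star q - T' (star a ⊗ₜ star b) ∈ W' := by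
  obtain ⟨n, u, v, rfl⟩ := TensorProduct.exists_fin_sum_tmul q
  simpa only [star_sum, TensorProduct.star_tmul, neg_sub] using neg_mem (h a b n u v hq)

end StarStructures

def IsInducedStar {A R : Type*} [NonUnitalRing A] [Module ℂ A] [SMulCommClass ℂ A A]
    [IsScalarTower ℂ A A] [Star A] (ι : R → Mult A) (st : R → R) : Prop :=
  ∀ (x : R) (a : A),
    (ι (st x)).L a = star ((ι x).R (star a)) ∧ (ι (st x)).R a = star ((ι x).L (star a))

theorem IsInducedStar.involutive {A R : Type*} [NonUnitalRing A] [Module ℂ A]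
    [SMulCommClass ℂ A A] [IsScalarTower ℂ A A] [StarRing A] {ι : R → Mult A} {st : R → R}
    (hst : IsInducedStar ι st) (hι : ∀ x y : R, (∀ a, (ι x).L a = (ι y).L a) → x = y) :
    Function.Involutive st :=
  fun x => hι _ _ fun a => by rw [(hst _ a).1, (hst x _).2, star_star, star_star]

namespace MBgdData

variable {A B C : Type*}
  [NonUnitalRing A] [Module ℂ A] [SMulCommClass ℂ A A] [IsScalarTower ℂ A A]
  [NonUnitalRing B] [Module ℂ B] [SMulCommClass ℂ B B] [IsScalarTower ℂ B B]
  [NonUnitalRing C] [Module ℂ C] [SMulCommClass ℂ C C] [IsScalarTower ℂ C C]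
  (D : MBgdData A B C)

def leftActionC : C →ₗ[ℂ] A →ₗ[ℂ] A where
  toFun y := (D.ιC y).L
  map_add' y y' := by rw [D.ιC_add]; rfl
  map_smul' c y := by rw [D.ιC_smul]; rfl

def rightActionC : C →ₗ[ℂ] A →ₗ[ℂ] A where
  toFun y := (D.ιC y).R
  map_add' y y' := by rw [D.ιC_add]; rfl
  map_smul' c y := by rw [D.ιC_smul]; rfl

theorem eq_of_forall_ιC_L_eq {y y' : C} (h : ∀ a, (D.ιC y).L a = (D.ιC y').L a) : y = y' :=
  sub_eq_zero.1 <| D.C_ndl _ fun a => by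
    change D.leftActionC (y - y') a = 0
    rw [map_sub, LinearMap.sub_apply, sub_eq_zero]
    exact h a

theorem ιC_mul_L (y y' : C) (a : A) : (D.ιC (y * y')).L a = (D.ιC y).L ((D.ιC y').L a) := by
  rw [D.ιC_mul]; rfl

theorem ιB_mul_R (x x' : B) (a : A) : (D.ιB (x * x')).R a = (D.ιB x').R ((D.ιB x).R a) := by
  rw [D.ιB_mul]; rfl

theorem ιB_ιC_L_comm (x : B) (y : C) (a : A) :
    (D.ιB x).L ((D.ιC y).L a) = (D.ιC y).L ((D.ιB x).L a) :=
  LinearMap.congr_fun (congrArg Mult.L (D.bc_comm x y)) a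

theorem ιB_ιC_R_comm (x : B) (y : C) (a : A) :
    (D.ιB x).R ((D.ιC y).R a) = (D.ιC y).R ((D.ιB x).R a) :=
  (LinearMap.congr_fun (congrArg Mult.R (D.bc_comm x y)) a).symm

theorem rmul₂_mem_relbar (c : A) {w : A ⊗[ℂ] A} (hw : w ∈ D.relbar) : rmul₂ c w ∈ D.relbar := by
  have hmap : D.relbar.map (rmul₂ c) ≤ D.relbar := by
    rw [relbar, Submodule.map_span, Submodule.span_le]
    rintro _ ⟨_, ⟨x, a, b, rfl⟩, rfl⟩
    exact Submodule.subset_span ⟨x, a, b * c, by simp [rmul₂, (D.ιC (D.SB x)).hL]⟩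
  exact hmap (Submodule.mem_map_of_mem hw)

theorem linearMap_ext_sandwich {M : Type*} [AddCommGroup M] [Module ℂ M] {F G : A →ₗ[ℂ] M}
    (h : ∀ (a : A) (x x' : B) (y y' : C),
      F ((D.ιB x).L ((D.ιC y).L ((D.ιC y').R ((D.ιB x').R a)))) =
        G ((D.ιB x).L ((D.ιC y).L ((D.ιC y').R ((D.ιB x').R a))))) : F = G :=
  LinearMap.ext_comp_of_span_eq_top D.BA_span fun x =>
    LinearMap.ext_comp_of_span_eq_top D.CA_span fun y =>
      LinearMap.ext_comp_of_span_eq_top D.AC_span fun y' =>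
        LinearMap.ext_comp_of_span_eq_top D.AB_span fun x' =>
          LinearMap.ext fun a => h a x x' y y'

section Antipode

variable {D} {S : A ≃ₗ[ℂ] A} {εB : A →ₗ[ℂ] B} {εC : A →ₗ[ℂ] C}

theorem antipode_ιC_L (hS : D.IsAntipodeWith S εB εC) (y : C) (a : A) :
    S ((D.ιC y).L a) = (D.ιB (D.SC y)).R (S a) := by
  suffices h : S.toLinearMap ∘ₗ (D.ιC y).L = (D.ιB (D.SC y)).R ∘ₗ S.toLinearMap from
    LinearMap.congr_fun h a
  refine D.linearMap_ext_sandwich fun a x x' y₁ y' => ?_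
  simp only [LinearMap.comp_apply, LinearEquiv.coe_coe]
  rw [← D.ιB_ιC_L_comm, ← D.ιC_mul_L, hS.2.1, hS.2.1, D.SC_antimul, D.ιB_mul_R,
    D.ιB_ιC_R_comm]

theorem antipode_Tl (hL3 : D.cL3) (hS : D.IsAntipodeWith S εB εC) {a b : A} {q : A ⊗[ℂ] A}
    (hq : q - D.Tl (a ⊗ₜ b) ∈ D.relbar) :
    TensorProduct.lift (LinearMap.mul ℂ A ∘ₗ S.toLinearMap) q = S ((D.ιC (εC b)).L a) := by
  set Φ := TensorProduct.lift (LinearMap.mul ℂ A ∘ₗ S.toLinearMap)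
  have hTr : ∀ {a b : A} {w : A ⊗[ℂ] A}, w - D.Tr (a ⊗ₜ b) ∈ D.relbar →
      Φ w = (D.ιB (D.SC (εC a))).L b :=
    fun hw => TensorProduct.lift_eq_of_sub_mem (LinearMap.mul ℂ A ∘ₗ S.toLinearMap)
      (hS.2.2.2.2.1 _ _) hw
  have hker : D.relbar ≤ LinearMap.ker Φ := fun r hr => by
    simpa using hTr (a := 0) (b := 0) (by simpa using hr)
  have hrmul₂ (c : A) (w : A ⊗[ℂ] A) : Φ (rmul₂ c w) = Φ w * c := by
    induction w using TensorProduct.induction_on with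
    | zero => simp
    | tmul u v => simp [Φ, rmul₂, mul_assoc]
    | add w w' h h' => simp [h, h', add_mul]
  have hrmul₁ (c : A) (w : A ⊗[ℂ] A) : Φ (rmul₁ c w) = S c * Φ w := by
    induction w using TensorProduct.induction_on with
    | zero => simp
    | tmul u v => simp [Φ, rmul₁, hS.1, mul_assoc]
    | add w w' h h' => simp [h, h', mul_add]
  refine sub_eq_zero.1 (D.A_ndl _ fun c => ?_)
  have hq' : Φ (rmul₂ c q) = Φ (rmul₁ a (D.Tr (b ⊗ₜ c))) := by
    refine LinearMap.sub_mem_ker_iff.1 (hker ?_)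
    simpa only [map_sub, sub_add_sub_cancel] using
      add_mem (D.rmul₂_mem_relbar c hq) (hL3 a b c)
  have hTrbc : Φ (D.Tr (b ⊗ₜ c)) = (D.ιB (D.SC (εC b))).L c :=
    hTr (by rw [sub_self]; exact zero_mem _)
  rw [sub_mul, ← hrmul₂, hq', hrmul₁, hTrbc, antipode_ιC_L hS, (D.ιB (D.SC (εC b))).hC, sub_self]

end Antipode

section Involution

variable [StarRing A] [StarModule ℂ A] {D} {starC : C → C}

theorem SB_leftCounit_eq_star_rightCounit
    (hstarC : ∀ (y : C) (a : A), (D.ιC (starC y)).L a = star ((D.ιC y).R (star a)))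
    (hTr : ∀ w, ∃ u, D.Tr u - w ∈ D.relbar)
    (hstarTr : StarIntertwines D.Tr D.rT D.relbar D.relund)
    {εB : A →ₗ[ℂ] B} {εC : A →ₗ[ℂ] C} (hεB : D.IsLeftCounit εB) (hεC : D.IsRightCounit εC)
    (a : A) : D.SB (εB a) = starC (εC (star a)) := by
  set Φ := TensorProduct.lift (D.leftActionC ∘ₗ D.SB ∘ₗ εB)
  -- `Ψ w = star (Ψ₀ (star w))`, ℂ-linear as the intrinsic star of the linear map `Ψ₀`
  set Ψ := (star (WithConv.toConv (TensorProduct.lift (D.rightActionC ∘ₗ εC)))).ofConv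
  have hΦΨ : Φ = Ψ := by
    refine LinearMap.eq_of_eq_on_representatives D.Tr hTr fun a b q hq => ?_
    rw [TensorProduct.lift_eq_of_sub_mem (D.leftActionC ∘ₗ D.SB ∘ₗ εB) (hεB.2.2.1 a b) hq]
    have := TensorProduct.lift_eq_of_sub_mem (D.rightActionC ∘ₗ εC) (hεC.2.2.1 (star a) (star b))
      (hstarTr.star_sub_mem hq)
    simp [Ψ, this]
  refine D.eq_of_forall_ιC_L_eq fun v => ?_
  simpa [Φ, Ψ, leftActionC, rightActionC, hstarC] using LinearMap.congr_fun hΦΨ (a ⊗ₜ v)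

theorem star_antipode_Tl
    (hstarC : IsInducedStar D.ιC starC)
    (hTr : ∀ w, ∃ u, D.Tr u - w ∈ D.relbar)
    (hstarTr : StarIntertwines D.Tr D.rT D.relbar D.relund)
    (hstarTl : StarIntertwines D.Tl D.lT D.relbar D.relund)
    {S : A ≃ₗ[ℂ] A} {εB : A →ₗ[ℂ] B} {εC : A →ₗ[ℂ] C} (hS : D.IsAntipodeWith S εB εC)
    {a b : A} {q : A ⊗[ℂ] A} (hq : q - D.Tl (a ⊗ₜ b) ∈ D.relbar) :
    star (TensorProduct.lift ((LinearMap.mul ℂ A).compl₂ S.toLinearMap) (star q)) =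
      (D.ιC (εC b)).L a := by
  have hinv : Function.Involutive starC := hstarC.involutive fun _ _ => D.eq_of_forall_ιC_L_eq
  rw [TensorProduct.lift_eq_of_sub_mem ((LinearMap.mul ℂ A).compl₂ S.toLinearMap)
      (hS.2.2.2.2.2 (star a) (star b)) (hstarTl.star_sub_mem hq),
    SB_leftCounit_eq_star_rightCounit (fun y a => (hstarC y a).1) hTr hstarTr hS.2.2.1
      hS.2.2.2.1, star_star, ← (hstarC _ a).1, hinv]

theorem antipode_star_antipode_star (hL3 : D.cL3) (hTl : ∀ w, ∃ u, D.Tl u - w ∈ D.relbar)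
    (hstarC : IsInducedStar D.ιC starC)
    (hTr : ∀ w, ∃ u, D.Tr u - w ∈ D.relbar)
    (hstarTr : StarIntertwines D.Tr D.rT D.relbar D.relund)
    (hstarTl : StarIntertwines D.Tl D.lT D.relbar D.relund)
    {S : A ≃ₗ[ℂ] A} {εB : A →ₗ[ℂ] B} {εC : A →ₗ[ℂ] C} (hS : D.IsAntipodeWith S εB εC)
    (v : A) : S (star (S (star v))) = v := by
  set Ξ := (star (WithConv.toConv
    (TensorProduct.lift ((LinearMap.mul ℂ A).compl₂ S.toLinearMap)))).ofConv
  have hcomp : S.toLinearMap ∘ₗ Ξ = TensorProduct.lift (LinearMap.mul ℂ A ∘ₗ S.toLinearMap) :=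
    LinearMap.eq_of_eq_on_representatives D.Tl hTl fun a b q hq => by
      rw [antipode_Tl hL3 hS hq, ← star_antipode_Tl hstarC hTr hstarTr hstarTl hS hq]
      rfl
  refine sub_eq_zero.1 (D.A_ndr _ fun p => ?_)
  have := LinearMap.congr_fun hcomp (S.symm p ⊗ₜ v)
  simp only [Ξ, LinearMap.comp_apply, LinearMap.intrinsicStar_apply] at this
  simpa [hS.1, sub_eq_zero, mul_sub] using this

end Involution

end MBgdData

section Star17

variable {A B C : Type*}
  [NonUnitalRing A] [Module ℂ A] [SMulCommClass ℂ A A] [IsScalarTower ℂ A A]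
  [StarRing A] [StarModule ℂ A]
  [NonUnitalRing B] [Module ℂ B] [SMulCommClass ℂ B B] [IsScalarTower ℂ B B]
  [NonUnitalRing C] [Module ℂ C] [SMulCommClass ℂ C C] [IsScalarTower ℂ C C]

theorem stmt17_general (D : MBgdData A B C) (hD : D.IsMBialgebroid) (hreg : D.IsRegular)
    (starB : B → B) (starC : C → C)
    (hstarC : ∀ (y : C) (a : A),
      (D.ιC (starC y)).L a = star ((D.ιC y).R (star a)) ∧
      (D.ιC (starC y)).R a = star ((D.ιC y).L (star a)))
    (hSBSC : ∀ y : C, D.SB (starB (D.SC (starC y))) = y)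
    (hstarTl : ∀ (a b : A) (n : ℕ) (uu vv : Fin n → A),
      (∑ j, uu j ⊗ₜ[ℂ] vv j) - D.Tl (a ⊗ₜ[ℂ] b) ∈ D.relbar →
      D.lT (star a ⊗ₜ[ℂ] star b) - (∑ j, star (uu j) ⊗ₜ[ℂ] star (vv j)) ∈ D.relund)
    (hstarTr : ∀ (a b : A) (n : ℕ) (uu vv : Fin n → A),
      (∑ j, uu j ⊗ₜ[ℂ] vv j) - D.Tr (a ⊗ₜ[ℂ] b) ∈ D.relbar →
      D.rT (star a ⊗ₜ[ℂ] star b) - (∑ j, star (uu j) ⊗ₜ[ℂ] star (vv j)) ∈ D.relund)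
    (εB : A →ₗ[ℂ] B) (hεB : D.IsLeftCounit εB)
    (εC : A →ₗ[ℂ] C) (hεC : D.IsRightCounit εC)
    (S : A ≃ₗ[ℂ] A) (hS : D.IsAntipode S) :
    ∀ a : A, εC (star a) = starC (D.SB (εB a)) ∧
      εB (star a) = starB (D.SC (εC a)) ∧
      S (star (S (star a))) = a := by
  obtain ⟨-, -, -, -, hL3, -⟩ := hD
  obtain ⟨-, -, hTl, -, hTr, -⟩ := hreg
  obtain ⟨_, _, hS⟩ := hS
  have hinv : Function.Involutive starC :=
    IsInducedStar.involutive hstarC fun _ _ => D.eq_of_forall_ιC_L_eq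
  have hcounit := MBgdData.SB_leftCounit_eq_star_rightCounit (fun y a => (hstarC y a).1) hTr
    hstarTr hεB hεC
  intro a
  refine ⟨?_, D.SB_bij.1 ?_,
    MBgdData.antipode_star_antipode_star hL3 hTl hstarC hTr hstarTr hstarTl hS a⟩
  · rw [hcounit, hinv]
  · have hSB := hSBSC (starC (εC a))
    rw [hinv] at hSB
    rw [hSB, hcounit, star_star]

/-- on a multiplier Hopf `*`-algebroid, the counits and the antipode are
compatible with the involution: `ε_C(a*) = (S_B(ε_B(a)))*`, `ε_B(a*) = (S_C(ε_C(a)))*`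
and `S((S(a*))*) = a`. -/
theorem stmt17 (D : MBgdData A B C) (hD : D.IsMBialgebroid) (hreg : D.IsRegular)
    (starB : B → B) (starC : C → C)
    (hstarB : ∀ (x : B) (a : A),
      (D.ιB (starB x)).L a = star ((D.ιB x).R (star a)) ∧
      (D.ιB (starB x)).R a = star ((D.ιB x).L (star a)))
    (hstarC : ∀ (y : C) (a : A),
      (D.ιC (starC y)).L a = star ((D.ιC y).R (star a)) ∧
      (D.ιC (starC y)).R a = star ((D.ιC y).L (star a)))
    (hSBSC : ∀ y : C, D.SB (starB (D.SC (starC y))) = y)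
    (hSCSB : ∀ x : B, D.SC (starC (D.SB (starB x))) = x)
    (hstarTl : ∀ (a b : A) (n : ℕ) (uu vv : Fin n → A),
      (∑ j, uu j ⊗ₜ[ℂ] vv j) - D.Tl (a ⊗ₜ[ℂ] b) ∈ D.relbar →
      D.lT (star a ⊗ₜ[ℂ] star b) - (∑ j, star (uu j) ⊗ₜ[ℂ] star (vv j)) ∈ D.relund)
    (hstarTr : ∀ (a b : A) (n : ℕ) (uu vv : Fin n → A),
      (∑ j, uu j ⊗ₜ[ℂ] vv j) - D.Tr (a ⊗ₜ[ℂ] b) ∈ D.relbar →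
      D.rT (star a ⊗ₜ[ℂ] star b) - (∑ j, star (uu j) ⊗ₜ[ℂ] star (vv j)) ∈ D.relund)
    (εB : A →ₗ[ℂ] B) (hεB : D.IsLeftCounit εB)
    (εC : A →ₗ[ℂ] C) (hεC : D.IsRightCounit εC)
    (S : A ≃ₗ[ℂ] A) (hS : D.IsAntipode S) :
    ∀ a : A, εC (star a) = starC (D.SB (εB a)) ∧
      εB (star a) = starB (D.SC (εC a)) ∧
      S (star (S (star a))) = a :=
  stmt17_general D hD hreg starB starC hstarC hSBSC hstarTl hstarTr εB hεB εC hεC S hS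

end Star17
end
end
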